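/- Let C be a Barr-exact Mal'tsev category, E its regular epimorphisms, and X a Birkhoff subcategory of C (full reflective subcategory closed under subobjects and regular quotients). Then X is strongly E-Birkhoff: for every regular epimorphism f : A → B, the naturality square with legs η_A : A → HI(A), η_B : B → HI(B), f, and HI(f) is a double extension. -/

import Mathlib

open CategoryTheory CategoryTheory.Limits

universe v u v' u'

namespace GaloisPaper

variable {C : Type u} [Category.{v} C]

/-- The class `E¹` of "double extensions" relative to a class `F` of morphisms:
a commutative square (i.e. a morphism `σ : a ⟶ b` of the arrow category) with all
four arrows in `F`, such that the comparison morphism to the pullback lies in `F`. -/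
def InE1 (F : MorphismProperty C) : MorphismProperty (Arrow C) := fun a b σ =>
  F a.hom ∧ F b.hom ∧ F σ.left ∧ F σ.right ∧
    ∃ (P : C) (p₁ : P ⟶ a.right) (p₂ : P ⟶ b.left) (l : a.left ⟶ P),
      IsPullback p₁ p₂ σ.right b.hom ∧ l ≫ p₁ = a.hom ∧ l ≫ p₂ = σ.left ∧ F l

/-- (E1): `F` contains all isomorphisms (between objects satisfying `O`). -/
def CondE1 (O : C → Prop) (F : MorphismProperty C) : Prop :=
  ∀ ⦃a b : C⦄ (σ : a ⟶ b), O a → O b → IsIso σ → F σ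

/-- (E2): `F` is pullback-stable: pullbacks of morphisms of `F` along arbitrary
morphisms (between objects satisfying `O`) exist and lie in `F`. -/
def CondE2 (O : C → Prop) (F : MorphismProperty C) : Prop :=
  ∀ ⦃a b : C⦄ (σ : a ⟶ b), F σ → ∀ ⦃c : C⦄ (g : c ⟶ b), O c →
    (∃ (d : C) (q₁ : d ⟶ a) (q₂ : d ⟶ c), O d ∧ IsPullback q₁ q₂ σ g ∧ F q₂) ∧
    (∀ ⦃d : C⦄ (q₁ : d ⟶ a) (q₂ : d ⟶ c), O d → IsPullback q₁ q₂ σ g → F q₂)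

/-- (E3): `F` is closed under composition. -/
def CondE3 (F : MorphismProperty C) : Prop :=
  ∀ ⦃a b c : C⦄ (σ : a ⟶ b) (τ : b ⟶ c), F σ → F τ → F (σ ≫ τ)

/-- (E4): if `σ ≫ τ ∈ F` then `τ ∈ F`. -/
def CondE4 (O : C → Prop) (F : MorphismProperty C) : Prop :=
  ∀ ⦃a b c : C⦄ (σ : a ⟶ b) (τ : b ⟶ c), O a → O b → O c → F (σ ≫ τ) → F τ

/-- (E5): every split epimorphism of `Ext(C)` (i.e. every morphism of the arrow
category between `F`-arrows admitting a section) lies in `F¹`. -/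
def CondE5 (F : MorphismProperty C) : Prop :=
  ∀ ⦃a b : Arrow C⦄ (σ : a ⟶ b) (τ : b ⟶ a), τ ≫ σ = 𝟙 b → F a.hom → F b.hom → InE1 F σ

/-- `(C ↓ B)`: the full subcategory of `Over B` on morphisms in `F`. -/
def EOver (F : MorphismProperty C) (B : C) :=
  ObjectProperty.FullSubcategory (fun f : Over B => F f.hom)

instance (F : MorphismProperty C) (B : C) : Category (EOver F B) :=
  ObjectProperty.FullSubcategory.category _

/-- `Σ_p`: composition with `p`, as a functor `(C ↓ A) ⥤ (C ↓ B)`. -/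
def eMap (F : MorphismProperty C) {A B : C} (p : A ⟶ B)
    (hcomp : ∀ ⦃Z : C⦄ (f : Z ⟶ A), F f → F (f ≫ p)) : EOver F A ⥤ EOver F B :=
  ObjectProperty.lift _ (ObjectProperty.ι (fun f : Over A => F f.hom) ⋙ Over.map p)
    (fun f => hcomp f.obj.hom f.property)

/-- `p` is a monadic extension (effective `F`-descent morphism): `p ∈ F` and the
pullback functor `p* : (C ↓ B) ⥤ (C ↓ A)` (i.e. the right adjoint of `Σ_p`) is monadic. -/
def IsMonadicExt (F : MorphismProperty C) {A B : C} (p : A ⟶ B) : Prop :=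
  F p ∧ ∃ (hcomp : ∀ ⦃Z : C⦄ (f : Z ⟶ A), F f → F (f ≫ p))
    (G : EOver F B ⥤ EOver F A) (_ : eMap F p hcomp ⊣ G),
    Nonempty (MonadicRightAdjoint G)

/-- `u : e ⟶ r` exhibits `r` as a reflection of `e` into the full subcategory
determined by `P`. -/
def IsReflectionInto {D : Type u'} [Category.{v'} D] (P : D → Prop) {e r : D}
    (u : e ⟶ r) : Prop :=
  P r ∧ ∀ ⦃a : D⦄, P a → ∀ k : e ⟶ a, ∃! m : r ⟶ a, u ≫ m = k

/-- A Galois structure `(C, X, H, I, η, E)` as in Janelidze–Kelly: a full replete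
reflective subcategory together with a class `E` satisfying (E1)–(E3) and (G). -/
structure GaloisStructure (C : Type u) [Category.{v} C] (X : Type u') [Category.{v'} X] where
  H : X ⥤ C
  I : C ⥤ X
  adj : I ⊣ H
  hFull : H.Full
  hFaithful : H.Faithful
  E : MorphismProperty C
  hE1 : CondE1 (fun _ => True) E
  hE2 : CondE2 (fun _ => True) E
  hE3 : CondE3 E
  hG : ∀ ⦃A B : C⦄ (f : A ⟶ B), E f → E (H.map (I.map f))

namespace GaloisStructure

variable {X : Type u'} [Category.{v'} X] (Γ : GaloisStructure C X)

/-- The component `η_A : A ⟶ HI(A)` of the reflection unit. -/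
def unitApp (A : C) : A ⟶ Γ.H.obj (Γ.I.obj A) := Γ.adj.unit.app A

/-- A trivial covering: `f ∈ E` whose `η`-naturality square is a pullback. -/
def TrivCov {A B : C} (f : A ⟶ B) : Prop :=
  Γ.E f ∧ IsPullback (Γ.unitApp A) f (Γ.H.map (Γ.I.map f)) (Γ.unitApp B)

/-- `f` is split by `p`: the pullback `p*(f)` of `f` along `p` is a trivial covering. -/
def IsSplitBy {A B E' : C} (f : A ⟶ B) (p : E' ⟶ B) : Prop :=
  ∀ ⦃P : C⦄ (p₁ : P ⟶ A) (p₂ : P ⟶ E'), IsPullback p₁ p₂ f p → Γ.TrivCov p₂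

/-- A covering (central extension): a morphism of `E` split by some monadic extension. -/
def Covering {A B : C} (f : A ⟶ B) : Prop :=
  Γ.E f ∧ ∃ (E' : C) (p : E' ⟶ B), IsMonadicExt Γ.E p ∧ Γ.IsSplitBy f p

/-- A normal extension: a monadic extension split by itself. -/
def NormalExt {A B : C} (p : A ⟶ B) : Prop :=
  IsMonadicExt Γ.E p ∧ Γ.IsSplitBy p p

/-- (M): every morphism of `E` is a monadic extension. -/
def CondM : Prop := ∀ ⦃A B : C⦄ (p : A ⟶ B), Γ.E p → IsMonadicExt Γ.E p

/-- Admissibility of the Galois structure: the right adjoints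
`H^B : (X ↓ I(B)) ⥤ (C ↓ B)` are fully faithful.  Equivalently (and this is how we
state it), for every `φ : x ⟶ I(B)` with `H(φ) ∈ E` and every pullback of `H(φ)`
along `η_B`, the corresponding component of the counit of `I^B ⊣ H^B`, i.e. the
adjoint transpose `I(A) ⟶ x` of `t : A ⟶ H(x)`, is an isomorphism. -/
def Admissible : Prop :=
  ∀ ⦃B : C⦄ ⦃x : X⦄ (φ : x ⟶ Γ.I.obj B), Γ.E (Γ.H.map φ) →
    ∀ ⦃A : C⦄ (t : A ⟶ Γ.H.obj x) (f : A ⟶ B),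
      IsPullback t f (Γ.H.map φ) (Γ.unitApp B) →
      IsIso ((Γ.adj.homEquiv A x).symm t)

/-- The `η`-naturality square at `f`, as a morphism of the arrow category. -/
def unitSq {A B : C} (f : A ⟶ B) : Arrow.mk f ⟶ Arrow.mk (Γ.H.map (Γ.I.map f)) :=
  Arrow.homMk (u := Γ.unitApp A) (v := Γ.unitApp B)
    (by simp [unitApp])

/-- (B): `X` is a strongly `E`-Birkhoff subcategory of `C`: every `η`-naturality
square at a morphism of `E` lies in `E¹`. -/
def StronglyBirkhoff : Prop :=
  ∀ ⦃A B : C⦄ (f : A ⟶ B), Γ.E f → InE1 Γ.E (Γ.unitSq f)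

/-- `I` preserves pullbacks of morphisms of `E` along split epimorphisms of `E`. -/
def PreservesSplitPullbacks : Prop :=
  ∀ ⦃D' A B C' : C⦄ (t : D' ⟶ A) (h : D' ⟶ C') (f : A ⟶ B) (g : C' ⟶ B),
    IsPullback t h f g → Γ.E f → Γ.E g → IsSplitEpi g →
    IsPullback (Γ.I.map t) (Γ.I.map h) (Γ.I.map f) (Γ.I.map g)

end GaloisStructure

/-- The class of regular epimorphisms. -/
def regEpi (C : Type u) [Category.{v} C] : MorphismProperty C :=
  fun _ _ f => Nonempty (RegularEpi f)

/-- A pair of parallel morphisms is jointly monic. -/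
def JointlyMono {R A : C} (d₀ d₁ : R ⟶ A) : Prop :=
  ∀ ⦃T : C⦄ (x y : T ⟶ R), x ≫ d₀ = y ≫ d₀ → x ≫ d₁ = y ≫ d₁ → x = y

/-- An internal reflexive relation (given by its jointly monic pair of projections). -/
def IsReflexiveRel {R A : C} (d₀ d₁ : R ⟶ A) : Prop :=
  JointlyMono d₀ d₁ ∧ ∃ r : A ⟶ R, r ≫ d₀ = 𝟙 A ∧ r ≫ d₁ = 𝟙 A

/-- An internal equivalence relation. -/
def IsEquivRel {R A : C} (d₀ d₁ : R ⟶ A) : Prop :=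
  IsReflexiveRel d₀ d₁ ∧ (∃ s : R ⟶ R, s ≫ d₀ = d₁ ∧ s ≫ d₁ = d₀) ∧
    ∀ ⦃T : C⦄ (x y : T ⟶ R), x ≫ d₁ = y ≫ d₀ →
      ∃ t : T ⟶ R, t ≫ d₀ = x ≫ d₀ ∧ t ≫ d₁ = y ≫ d₁

/-- A Mal'tsev category: every internal reflexive relation is an equivalence relation. -/
def IsMaltsevCat (C : Type u) [Category.{v} C] : Prop :=
  ∀ ⦃A R : C⦄ (d₀ d₁ : R ⟶ A), IsReflexiveRel d₀ d₁ → IsEquivRel d₀ d₁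

/-- A regular category: finite limits (assumed separately), regular epi–mono
factorisations, and pullback-stability of regular epimorphisms. -/
structure IsRegularCategory (C : Type u) [Category.{v} C] : Prop where
  factor : ∀ ⦃A B : C⦄ (f : A ⟶ B), ∃ (I' : C) (e : A ⟶ I') (m : I' ⟶ B),
    f = e ≫ m ∧ Nonempty (RegularEpi e) ∧ Mono m
  stable : ∀ ⦃P' X' Y' Z' : C⦄ (p₁ : P' ⟶ X') (p₂ : P' ⟶ Y') (f : X' ⟶ Z') (g : Y' ⟶ Z'),
    IsPullback p₁ p₂ f g → Nonempty (RegularEpi f) → Nonempty (RegularEpi p₂)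

/-- A Barr-exact category: regular, and every internal equivalence relation is
effective (i.e. a kernel pair). -/
def IsBarrExact (C : Type u) [Category.{v} C] : Prop :=
  IsRegularCategory C ∧ ∀ ⦃A R : C⦄ (d₀ d₁ : R ⟶ A), IsEquivRel d₀ d₁ →
    ∃ (Q : C) (q : A ⟶ Q), IsPullback d₀ d₁ q q

/-- A Birkhoff subcategory: a full reflective subcategory closed under subobjects
and regular quotient objects. -/
structure IsBirkhoff {X : Type u'} [Category.{v'} X] (H : X ⥤ C) (I : C ⥤ X)
    (adj : I ⊣ H) : Prop where
  full : H.Full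
  faithful : H.Faithful
  closedSub : ∀ (x : X) (A : C) (m : A ⟶ H.obj x), Mono m → ∃ y : X, Nonempty (A ≅ H.obj y)
  closedQuot : ∀ (x : X) (A : C) (e : H.obj x ⟶ A), Nonempty (RegularEpi e) →
    ∃ y : X, Nonempty (A ≅ H.obj y)

/-- The category `Ext(C)` of `F`-morphisms. -/
def ExtCat (F : MorphismProperty C) := ObjectProperty.FullSubcategory (fun a : Arrow C => F a.hom)

instance (F : MorphismProperty C) : Category (ExtCat F) := ObjectProperty.FullSubcategory.category _

/-- The restriction of `F¹` to the category `Ext(C)`. -/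
def ExtE1 (F : MorphismProperty C) : MorphismProperty (ExtCat F) :=
  fun _ _ σ => InE1 F ((ObjectProperty.ι (fun a : Arrow C => F a.hom)).map σ)

/-! Since `X` is closed under subobjects, each `η_A` is a regular epimorphism. The composite
`R[f] ∘ R[η_A]` of the kernel pairs of `f` and `η_A` is a reflexive relation, hence (Mal'tsev)
an equivalence relation, hence (exactness) the kernel pair of a regular epimorphism
`q : A ⟶ Q`. Being a regular quotient of `HI(A)`, `Q` lies in `X`, so `q`, which factors
through `f`, factors through `f ≫ η_B`. Thus `R[f ≫ η_B] ⊆ R[f] ∘ R[η_A]`, and in a regular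
category this inclusion makes the comparison map `A ⟶ B ×_{HI(B)} HI(A)` a regular
epimorphism. -/

theorem IsRegularCategory.regular [HasFiniteLimits C] (hreg : IsRegularCategory C) :
    Regular C where
  hasCoequalizer_of_isKernelPair {_ _ _ f _ _} hk := by
    obtain ⟨_, e, m, rfl, ⟨he⟩, hm⟩ := hreg.factor f
    exact ⟨⟨⟨_, (effectiveEpiStructOfRegularEpi he).isColimitCoforkOfIsPullback
      (IsKernelPair.cancel_right_of_mono hk)⟩⟩⟩
  regularEpiIsStableUnderBaseChange := ⟨fun sq ⟨hg⟩ => ⟨hreg.stable _ _ _ _ sq hg⟩⟩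

theorem IsBarrExact.exists_isRegularEpi_isKernelPair (hex : IsBarrExact C) {A R : C}
    {d₀ d₁ : R ⟶ A} (h : IsEquivRel d₀ d₁) :
    ∃ (Q : C) (q : A ⟶ Q), IsRegularEpi q ∧ IsKernelPair q d₀ d₁ := by
  obtain ⟨Q₀, q₀, hq₀⟩ := hex.2 d₀ d₁ h
  obtain ⟨Q, q, m, rfl, ⟨hq⟩, _⟩ := hex.1.factor q₀
  exact ⟨Q, q, ⟨⟨hq⟩⟩, IsKernelPair.cancel_right_of_mono hq₀⟩

section Regular

variable [Regular C]

theorem isRegularEpi_of_comp {A B D : C} (f : A ⟶ B) (g : B ⟶ D) [IsRegularEpi (f ≫ g)] :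
    IsRegularEpi g :=
  have := strongEpi_of_strongEpi f g
  inferInstance

theorem exists_isRegularEpi_lift_pair {A A' B B' P : C} (f : A ⟶ B) (g : A' ⟶ B')
    [IsRegularEpi f] [IsRegularEpi g] (p₁ : P ⟶ B) (p₂ : P ⟶ B') :
    ∃ (T : C) (c : T ⟶ P) (x : T ⟶ A) (y : T ⟶ A'),
      IsRegularEpi c ∧ x ≫ f = c ≫ p₁ ∧ y ≫ g = c ≫ p₂ := by
  let c₁ := pullback.snd f p₁
  refine ⟨_, pullback.snd g (c₁ ≫ p₂) ≫ c₁, pullback.snd g (c₁ ≫ p₂) ≫ pullback.fst f p₁,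
    pullback.fst g (c₁ ≫ p₂), inferInstance, ?_, ?_⟩
  · simp [c₁, pullback.condition]
  · simp [pullback.condition]

end Regular

/-- The kernel pair of `d` is contained in the relational composite of the kernel pairs of `f`
and `g`, expressed with generalized elements: every pair identified by `d` becomes, after
refinement along a regular epimorphism, an `f`-related pair followed by a `g`-related one. -/
def KernelPairLEComp {A B B' D : C} (f : A ⟶ B) (g : A ⟶ B') (d : A ⟶ D) : Prop :=
  ∀ ⦃T : C⦄ (x y : T ⟶ A), x ≫ d = y ≫ d →
    ∃ (T' : C) (p : T' ⟶ T) (z : T' ⟶ A),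
      IsRegularEpi p ∧ p ≫ x ≫ f = z ≫ f ∧ z ≫ g = p ≫ y ≫ g

theorem KernelPairLEComp.of_comp {A B B' D D' : C} {f : A ⟶ B} {g : A ⟶ B'} {d : A ⟶ D}
    {d' : D ⟶ D'} (h : KernelPairLEComp f g (d ≫ d')) : KernelPairLEComp f g d :=
  fun _ x y hxy => h x y (by rw [reassoc_of% hxy])

theorem isRegularEpi_lift_of_kernelPairLEComp [Regular C] {A B B' D P : C}
    {f : A ⟶ B} {g : A ⟶ B'} {h : B ⟶ D} {k : B' ⟶ D} [IsRegularEpi f] [IsRegularEpi g]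
    {p₁ : P ⟶ B} {p₂ : P ⟶ B'} (hP : IsPullback p₁ p₂ h k) (hfg : f ≫ h = g ≫ k)
    (hd : KernelPairLEComp f g (f ≫ h)) : IsRegularEpi (hP.lift f g hfg) := by
  obtain ⟨T, c, x, y, hc, hx, hy⟩ := exists_isRegularEpi_lift_pair f g p₁ p₂
  obtain ⟨T', p, z, hp, hzf, hzg⟩ := hd x y (by rw [reassoc_of% hx, hfg, reassoc_of% hy, hP.w])
  have hz : z ≫ hP.lift f g hfg = p ≫ c := by
    apply hP.hom_ext <;> simp [← hzf, hzg, hx, hy]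
  have : IsRegularEpi (z ≫ hP.lift f g hfg) := hz ▸ inferInstance
  exact isRegularEpi_of_comp z _

section ExactMaltsev

variable [HasFiniteLimits C] (hex : IsBarrExact C) (hmal : IsMaltsevCat C)
include hex hmal

theorem exists_isRegularEpi_kernelPair_eq_image {K A : C} (u₀ u₁ : K ⟶ A) (r : A ⟶ K)
    (hr₀ : r ≫ u₀ = 𝟙 A) (hr₁ : r ≫ u₁ = 𝟙 A) :
    ∃ (Q : C) (q : A ⟶ Q), IsRegularEpi q ∧ u₀ ≫ q = u₁ ≫ q ∧
      ∀ ⦃T : C⦄ (x y : T ⟶ A), x ≫ q = y ≫ q →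
        ∃ (T' : C) (p : T' ⟶ T) (k : T' ⟶ K),
          IsRegularEpi p ∧ p ≫ x = k ≫ u₀ ∧ p ≫ y = k ≫ u₁ := by
  have := hex.1.regular
  obtain ⟨S, e, m, hem, ⟨he⟩, hm⟩ := hex.1.factor (prod.lift u₀ u₁)
  have : IsRegularEpi e := ⟨⟨he⟩⟩
  have he₀ : e ≫ m ≫ prod.fst = u₀ := by rw [← Category.assoc, ← hem, prod.lift_fst]
  have he₁ : e ≫ m ≫ prod.snd = u₁ := by rw [← Category.assoc, ← hem, prod.lift_snd]
  have hrefl : IsReflexiveRel (m ≫ prod.fst) (m ≫ prod.snd) := by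
    refine ⟨fun T x y h₀ h₁ => ?_, r ≫ e, by rw [Category.assoc, he₀, hr₀],
      by rw [Category.assoc, he₁, hr₁]⟩
    rw [← cancel_mono m]
    ext <;> simpa
  obtain ⟨Q, q, hq, hS⟩ := hex.exists_isRegularEpi_isKernelPair (hmal _ _ hrefl)
  refine ⟨Q, q, hq, by rw [← he₀, ← he₁]; simp only [Category.assoc e, hS.w], ?_⟩
  intro T x y hxy
  obtain ⟨s, hs₀, hs₁⟩ := hS.exists_lift x y hxy
  refine ⟨_, pullback.snd e s, pullback.fst e s, inferInstance, ?_, ?_⟩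
  · rw [← hs₀, ← he₀, ← Category.assoc, ← pullback.condition, Category.assoc]
  · rw [← hs₁, ← he₁, ← Category.assoc, ← pullback.condition, Category.assoc]

theorem exists_comp_eq_comp_kernelPairLEComp {A B B' : C} (f : A ⟶ B) (g : A ⟶ B')
    [IsRegularEpi f] [IsRegularEpi g] :
    ∃ (Q : C) (b : B ⟶ Q) (t : B' ⟶ Q),
      f ≫ b = g ≫ t ∧ IsRegularEpi t ∧ KernelPairLEComp f g (f ≫ b) := by
  have := hex.1.regular
  -- `pullback (pullback.snd f f) (pullback.fst g g)` is the object of chains `x ~f z ~g y`.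
  let u₀ : pullback (pullback.snd f f) (pullback.fst g g) ⟶ A :=
    pullback.fst _ _ ≫ pullback.fst f f
  let u₁ : pullback (pullback.snd f f) (pullback.fst g g) ⟶ A :=
    pullback.snd _ _ ≫ pullback.snd g g
  have hK : ∀ ⦃T : C⦄ (x z y : T ⟶ A), x ≫ f = z ≫ f → z ≫ g = y ≫ g →
      ∃ k : T ⟶ pullback (pullback.snd f f) (pullback.fst g g), k ≫ u₀ = x ∧ k ≫ u₁ = y :=
    fun _ x z y hxz hzy => ⟨pullback.lift (pullback.lift x z hxz) (pullback.lift z y hzy)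
      (by rw [pullback.lift_snd, pullback.lift_fst]),
      by simp only [u₀, pullback.lift_fst_assoc, pullback.lift_fst],
      by simp only [u₁, pullback.lift_snd_assoc, pullback.lift_snd]⟩
  obtain ⟨r, hr₀, hr₁⟩ := hK (𝟙 A) (𝟙 A) (𝟙 A) rfl rfl
  obtain ⟨Q, q, hq, hu, hS⟩ := exists_isRegularEpi_kernelPair_eq_image hex hmal u₀ u₁ r hr₀ hr₁
  have hcomp : ∀ ⦃T : C⦄ (x z y : T ⟶ A), x ≫ f = z ≫ f → z ≫ g = y ≫ g → x ≫ q = y ≫ q := by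
    intro T x z y hxz hzy
    obtain ⟨k, rfl, rfl⟩ := hK x z y hxz hzy
    simp only [Category.assoc, hu]
  obtain ⟨b, hb⟩ : ∃ b, f ≫ b = q :=
    ⟨EffectiveEpi.desc f q fun x y h => hcomp x y y h rfl, EffectiveEpi.fac f _ _⟩
  obtain ⟨t, ht⟩ : ∃ t, g ≫ t = q :=
    ⟨EffectiveEpi.desc g q fun x y h => hcomp x x y rfl h, EffectiveEpi.fac g _ _⟩
  have : IsRegularEpi (g ≫ t) := ht ▸ hq
  refine ⟨Q, b, t, hb.trans ht.symm, isRegularEpi_of_comp g t, fun T x y hxy => ?_⟩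
  rw [hb] at hxy
  obtain ⟨T', p, k, hp, hx, hy⟩ := hS x y hxy
  refine ⟨T', p, k ≫ pullback.fst _ _ ≫ pullback.snd f f, hp, ?_, ?_⟩
  · rw [reassoc_of% hx]
    simp only [u₀, Category.assoc]
    rw [pullback.condition (f := f) (g := f)]
  · rw [reassoc_of% hy]
    simp only [u₁, Category.assoc]
    rw [pullback.condition_assoc (f := pullback.snd f f), pullback.condition (f := g) (g := g)]

end ExactMaltsev

section Reflection

variable {X : Type u'} [Category.{v'} X] {H : X ⥤ C} {I : C ⥤ X}

theorem exists_unit_comp_eq (adj : I ⊣ H) {B Q : C} (hQ : H.essImage Q) (b : B ⟶ Q) :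
    ∃ b' : H.obj (I.obj B) ⟶ Q, adj.unit.app B ≫ b' = b := by
  obtain ⟨y, ⟨φ⟩⟩ := hQ
  obtain ⟨v, hv⟩ := (adj.homEquiv B y).surjective (b ≫ φ.inv)
  exact ⟨H.map v ≫ φ.hom, by simpa [adj.homEquiv_unit] using congrArg (· ≫ φ.hom) hv⟩

theorem unit_comp_injective (adj : I ⊣ H) [H.Full] {A : C} {x : X}
    {w₁ w₂ : H.obj (I.obj A) ⟶ H.obj x} (h : adj.unit.app A ≫ w₁ = adj.unit.app A ≫ w₂) :
    w₁ = w₂ := by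
  obtain ⟨v₁, rfl⟩ := H.map_surjective w₁
  obtain ⟨v₂, rfl⟩ := H.map_surjective w₂
  exact congrArg H.map ((adj.homEquiv A x).injective (by simpa [adj.homEquiv_unit] using h))

theorem IsBirkhoff.mem_essImage_of_mono {adj : I ⊣ H} (hbirk : IsBirkhoff H I adj) {x : X}
    {Q : C} (m : Q ⟶ H.obj x) [Mono m] : H.essImage Q :=
  have ⟨y, ⟨φ⟩⟩ := hbirk.closedSub x Q m inferInstance
  ⟨y, ⟨φ.symm⟩⟩

theorem IsBirkhoff.mem_essImage_of_isRegularEpi {adj : I ⊣ H} (hbirk : IsBirkhoff H I adj)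
    {x : X} {Q : C} (e : H.obj x ⟶ Q) [he : IsRegularEpi e] : H.essImage Q :=
  have ⟨y, ⟨φ⟩⟩ := hbirk.closedQuot x Q e he.regularEpi
  ⟨y, ⟨φ.symm⟩⟩

theorem IsBirkhoff.isRegularEpi_unit_app [Regular C] {adj : I ⊣ H}
    (hbirk : IsBirkhoff H I adj) (A : C) : IsRegularEpi (adj.unit.app A) := by
  have := hbirk.full
  let F := Regular.strongEpiMonoFactorisation (adj.unit.app A)
  obtain ⟨e', he'⟩ := exists_unit_comp_eq adj (hbirk.mem_essImage_of_mono F.m) F.e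
  have : IsSplitEpi F.m :=
    ⟨⟨e', unit_comp_injective adj (by rw [reassoc_of% he', F.fac, Category.comp_id])⟩⟩
  have : IsIso F.m := isIso_of_mono_of_isSplitEpi F.m
  rw [← F.fac]
  infer_instance

end Reflection

/-- If `C` is Barr-exact Mal'tsev and `X` is a Birkhoff subcategory,
then `X` is strongly `E`-Birkhoff (`E` = regular epimorphisms): for every regular
epimorphism `f : A ⟶ B`, the `η`-naturality square at `f` is a double extension. -/
theorem statement_10 {C : Type u} [Category.{v} C] [HasFiniteLimits C]
    {X : Type u'} [Category.{v'} X]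
    (hex : IsBarrExact C) (hmal : IsMaltsevCat C)
    (H : X ⥤ C) (I : C ⥤ X) (adj : I ⊣ H) (hbirk : IsBirkhoff H I adj)
    {A B : C} (f : A ⟶ B) (hf : Nonempty (RegularEpi f)) :
    InE1 (regEpi C)
      (Arrow.homMk (f := Arrow.mk f) (g := Arrow.mk (H.map (I.map f)))
        (u := adj.unit.app A) (v := adj.unit.app B) (by simp)) := by
  have := hex.1.regular
  have : IsRegularEpi f := ⟨hf⟩
  have hηA := hbirk.isRegularEpi_unit_app A
  have hηB := hbirk.isRegularEpi_unit_app B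
  have hnat : f ≫ adj.unit.app B = adj.unit.app A ≫ H.map (I.map f) := adj.unit.naturality f
  have : IsRegularEpi (adj.unit.app A ≫ H.map (I.map f)) := hnat ▸ inferInstance
  have hIf := isRegularEpi_of_comp (adj.unit.app A) (H.map (I.map f))
  obtain ⟨_, b, t, -, ht, hd⟩ := exists_comp_eq_comp_kernelPairLEComp hex hmal f (adj.unit.app A)
  obtain ⟨b', rfl⟩ := exists_unit_comp_eq adj (hbirk.mem_essImage_of_isRegularEpi t) b
  have hP := IsPullback.of_hasPullback (adj.unit.app B) (H.map (I.map f))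
  exact ⟨hf, hIf.regularEpi, hηA.regularEpi, hηB.regularEpi, _, _, _, _, hP,
    hP.lift_fst _ _ hnat, hP.lift_snd _ _ hnat,
    (isRegularEpi_lift_of_kernelPairLEComp hP hnat
      (.of_comp (d' := b') (by rwa [Category.assoc]))).regularEpi⟩

end GaloisPaper
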